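/- There exist ε₀ > 0 and C > 0 such that for every ε with 0 ≤ ε ≤ ε₀, the map X ↦ (γ(X) − ε κ(X))^{-1} is differentiable on ℝ^{m+2n} and for every X ∈ ℝ^m × ℝ^n × ℝ^n and every coordinate index 1 ≤ l ≤ m+2n, ‖∂/∂X_l [ (γ(X) − ε κ(X))^{-1} ]‖ < C. -/

import Mathlib

open scoped Matrix.Norms.L2Operator

noncomputable section

abbrev Idx (m n : ℕ) := Fin m ⊕ (Fin n ⊕ Fin n)

/-- The matrix `γ(X)` (which depends only on the `y`-component of `X`). -/
def gammaMat (m n : ℕ) (c : Fin m → ℝ) (k : Fin n → ℝ) (Γ Ω : ℝ)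
    (g : Fin m → Fin n → (Fin m → ℝ) → ℝ) (y : Fin m → ℝ) :
    Matrix (Idx m n) (Idx m n) ℝ :=
  Matrix.of fun i j =>
    match i, j with
    | .inl i, .inl j => if i = j then 1 / c i else 0
    | .inl i, .inr (.inl j) => -(g i j y / c i)
    | .inl _, .inr (.inr _) => 0
    | .inr (.inl _), .inl _ => 0
    | .inr (.inl _), .inr (.inl _) => 0
    | .inr (.inl i), .inr (.inr j) => if i = j then -(Γ / Ω ^ 2) * (1 / k i) else 0
    | .inr (.inr _), .inl _ => 0
    | .inr (.inr i), .inr (.inl j) => if i = j then Γ * (1 / k i) else 0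
    | .inr (.inr i), .inr (.inr j) => if i = j then (Γ ^ 2 / Ω ^ 2) * (1 / k i) else 0

/-- The matrix `κ(X)` (which depends only on the `y`-component of `X`). -/
def kappaMat (m n : ℕ) (c : Fin m → ℝ) (f : Fin m → (Fin m → ℝ) → ℝ) (y : Fin m → ℝ) :
    Matrix (Idx m n) (Idx m n) ℝ :=
  Matrix.of fun i j =>
    match i, j with
    | .inl i, .inl j => (c j / c i) * fderiv ℝ (f i) y (Pi.single j 1)
    | _, _ => (0 : ℝ)


/-- The standard basis vector of `ℝ^m × ℝ^n × ℝ^n` corresponding to coordinate `l`. -/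
def coordVec (m n : ℕ) (l : Idx m n) : (Fin m → ℝ) × (Fin n → ℝ) × (Fin n → ℝ) :=
  match l with
  | .inl i => (Pi.single i 1, 0, 0)
  | .inr (.inl j) => (0, Pi.single j 1, 0)
  | .inr (.inr j) => (0, 0, Pi.single j 1)


/-! For each `y`, `γ(y)` has an explicit inverse whose entries are bounded because the `g^{ij}`
are, and `κ(y)` is bounded because the `∂f^i/∂y_k` are. Hence `γ - εκ = γ (1 - ε γ⁻¹ κ)` is
invertible by a Neumann series once `ε ‖γ⁻¹‖ ‖κ‖ ≤ 1/2`, with `‖(γ - εκ)⁻¹‖` bounded uniformly in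
`y` and `ε`. The derivative of `A⁻¹` is `-A⁻¹ (DA) A⁻¹`, and `DA` is uniformly bounded because the
entries of `γ` and `κ` are Lipschitz (`g^{ij}` has bounded first and `f^i` bounded second
derivatives). -/

section RingInverse

variable {𝕜 E R : Type*} [NontriviallyNormedField 𝕜] [NormedAddCommGroup E] [NormedSpace 𝕜 E]
  [NormedRing R] [NormedAlgebra 𝕜 R] [CompleteSpace R]

theorem norm_fderiv_ringInverse_comp_le {A : E → R} {x : E} (hA : DifferentiableAt 𝕜 A x)
    (hx : IsUnit (A x)) :
    ‖fderiv 𝕜 (fun y => Ring.inverse (A y)) x‖ ≤ ‖Ring.inverse (A x)‖ ^ 2 * ‖fderiv 𝕜 A x‖ := by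
  obtain ⟨u, hu⟩ := hx
  rw [fderiv_fun_comp x (differentiableAt_inverse ⟨u, hu⟩) hA, ← hu, fderiv_inverse,
    Ring.inverse_unit, sq]
  calc _ ≤ ‖-ContinuousLinearMap.mulLeftRight 𝕜 R ↑u⁻¹ ↑u⁻¹‖ * ‖fderiv 𝕜 A x‖ :=
        ContinuousLinearMap.opNorm_comp_le _ _
    _ ≤ _ := by
        rw [norm_neg]
        gcongr
        exact ContinuousLinearMap.opNorm_mulLeftRight_apply_apply_le ..

theorem norm_ringInverse_one_sub_le {t : R} (ht : ‖t‖ ≤ 1 / 2) :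
    ‖Ring.inverse (1 - t)‖ ≤ ‖(1 : R)‖ + 1 := by
  have ht1 : ‖t‖ < 1 := by linarith
  rw [NormedRing.inverse_one_sub t ht1]
  refine (tsum_geometric_le_of_norm_lt_one t ht1).trans ?_
  have : (1 - ‖t‖)⁻¹ ≤ 2 := by
    rw [inv_le_comm₀ (by linarith) two_pos]
    linarith
  linarith

theorem isUnit_sub_and_norm_ringInverse_sub_le {a b : R} (ha : IsUnit a)
    (h : ‖Ring.inverse a‖ * ‖b‖ ≤ 1 / 2) :
    IsUnit (a - b) ∧ ‖Ring.inverse (a - b)‖ ≤ (‖(1 : R)‖ + 1) * ‖Ring.inverse a‖ := by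
  obtain ⟨u, rfl⟩ := ha
  set t := Ring.inverse (u : R) * b
  have ht : ‖t‖ ≤ 1 / 2 := (norm_mul_le _ _).trans h
  set v := Units.oneSub t (by linarith)
  have hsub : (u : R) - b = ↑(u * v) := by
    rw [Units.val_mul, Units.val_oneSub, mul_sub, mul_one, ← mul_assoc,
      Ring.mul_inverse_cancel _ u.isUnit, one_mul]
  refine ⟨hsub ▸ (u * v).isUnit, ?_⟩
  rw [hsub, Ring.inverse_unit, mul_inv_rev, Units.val_mul, Ring.inverse_unit]
  refine (norm_mul_le _ _).trans (mul_le_mul_of_nonneg_right ?_ (norm_nonneg _))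
  rw [← Ring.inverse_unit, Units.val_oneSub]
  exact norm_ringInverse_one_sub_le ht

theorem exists_norm_fderiv_ringInverse_sub_smul_lt {a b : E → R} {G K Da Db : ℝ}
    (ha : Differentiable 𝕜 a) (hb : Differentiable 𝕜 b) (ha_unit : ∀ x, IsUnit (a x))
    (ha_inv : ∀ x, ‖Ring.inverse (a x)‖ ≤ G) (hb_le : ∀ x, ‖b x‖ ≤ K)
    (ha' : ∀ x, ‖fderiv 𝕜 a x‖ ≤ Da) (hb' : ∀ x, ‖fderiv 𝕜 b x‖ ≤ Db) :
    ∃ ε₀ > (0 : ℝ), ∃ C > (0 : ℝ), ∀ ε : 𝕜, ‖ε‖ ≤ ε₀ →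
      Differentiable 𝕜 (fun x => Ring.inverse (a x - ε • b x)) ∧
      ∀ x, ‖fderiv 𝕜 (fun x => Ring.inverse (a x - ε • b x)) x‖ < C := by
  have hG : 0 ≤ G := (norm_nonneg _).trans (ha_inv 0)
  have hK : 0 ≤ K := (norm_nonneg _).trans (hb_le 0)
  have hDa : 0 ≤ Da := (norm_nonneg _).trans (ha' 0)
  have hDb : 0 ≤ Db := (norm_nonneg _).trans (hb' 0)
  set ε₀ := 1 / (2 * (G * K + 1))
  have hε₀ : 0 < ε₀ := by positivity
  set M := (‖(1 : R)‖ + 1) * G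
  refine ⟨ε₀, hε₀, M ^ 2 * (Da + ε₀ * Db) + 1, by positivity, fun ε hε => ?_⟩
  have hsmall : ∀ x, ‖Ring.inverse (a x)‖ * ‖ε • b x‖ ≤ 1 / 2 := fun x => by
    calc ‖Ring.inverse (a x)‖ * ‖ε • b x‖ ≤ G * (ε₀ * K) := by
          rw [norm_smul]; gcongr; exacts [ha_inv x, hb_le x]
      _ = 1 / 2 * (G * K / (G * K + 1)) := by simp only [ε₀]; field_simp
      _ ≤ 1 / 2 := mul_le_of_le_one_right (by norm_num) <| by
          rw [div_le_one (by positivity)]; linarith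
  have hunit x := (isUnit_sub_and_norm_ringInverse_sub_le (ha_unit x) (hsmall x)).1
  have hinv x := (isUnit_sub_and_norm_ringInverse_sub_le (ha_unit x) (hsmall x)).2
  have hd : Differentiable 𝕜 fun x => a x - ε • b x := ha.sub (hb.const_smul ε)
  refine ⟨fun x => (hd x).inverse (hunit x), fun x => ?_⟩
  have hd' : ‖fderiv 𝕜 (fun x => a x - ε • b x) x‖ ≤ Da + ε₀ * Db := by
    have hεb : DifferentiableAt 𝕜 (fun y => ε • b y) x := (hb x).const_smul ε
    rw [fderiv_fun_sub (ha x) hεb, fderiv_fun_const_smul (hb x)]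
    refine (norm_sub_le _ _).trans (add_le_add (ha' x) ?_)
    rw [norm_smul]
    gcongr
    exact hb' x
  calc ‖fderiv 𝕜 (fun x => Ring.inverse (a x - ε • b x)) x‖
      ≤ ‖Ring.inverse (a x - ε • b x)‖ ^ 2 * ‖fderiv 𝕜 (fun x => a x - ε • b x) x‖ :=
        norm_fderiv_ringInverse_comp_le (hd x) (hunit x)
    _ ≤ M ^ 2 * (Da + ε₀ * Db) := by
        gcongr
        exact (hinv x).trans (mul_le_mul_of_nonneg_left (ha_inv x) (by positivity))
    _ < _ := lt_add_one _

end RingInverse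

namespace Matrix

variable {𝕜 ι κ : Type*} [RCLike 𝕜] [Fintype ι] [Fintype κ] [DecidableEq ι] [DecidableEq κ]

theorem l2_opNorm_le_sum_entries (M : Matrix ι κ 𝕜) :
    ‖M‖ ≤ ∑ p, ∑ q, ‖M p q‖ * ‖(single p q 1 : Matrix ι κ 𝕜)‖ := by
  conv_lhs => rw [matrix_eq_sum_single M]
  refine (norm_sum_le _ _).trans <| Finset.sum_le_sum fun p _ =>
    (norm_sum_le _ _).trans <| Finset.sum_le_sum fun q _ => ?_
  rw [show single p q (M p q) = M p q • single p q 1 by rw [smul_single, smul_eq_mul, mul_one],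
    norm_smul]

theorem exists_norm_le_of_entries {α : Type*} {F : α → Matrix ι κ 𝕜}
    (h : ∀ p q, ∃ C, ∀ y, ‖F y p q‖ ≤ C) : ∃ C, ∀ y, ‖F y‖ ≤ C := by
  choose C hC using h
  refine ⟨∑ p, ∑ q, C p q * ‖(single p q 1 : Matrix ι κ 𝕜)‖, fun y => ?_⟩
  refine (l2_opNorm_le_sum_entries _).trans ?_
  gcongr with p _ q _
  exact hC p q y

theorem exists_lipschitzWith_of_entries {α : Type*} [PseudoMetricSpace α] {F : α → Matrix ι κ 𝕜}
    (h : ∀ p q, ∃ K, LipschitzWith K fun y => F y p q) : ∃ K, LipschitzWith K F := by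
  choose K hK using h
  refine ⟨_, LipschitzWith.of_dist_le'
    (K := ∑ p, ∑ q, K p q * ‖(single p q 1 : Matrix ι κ 𝕜)‖) fun x y => ?_⟩
  calc dist (F x) (F y) ≤ ∑ p, ∑ q, ‖F x p q - F y p q‖ * ‖(single p q 1 : Matrix ι κ 𝕜)‖ := by
        rw [dist_eq_norm]; exact l2_opNorm_le_sum_entries _
    _ ≤ ∑ p, ∑ q, K p q * dist x y * ‖(single p q 1 : Matrix ι κ 𝕜)‖ := by
        gcongr with p _ q _
        rw [← dist_eq_norm]
        exact (hK p q).dist_le_mul x y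
    _ = _ := by
        simp only [Finset.sum_mul]
        exact Finset.sum_congr rfl fun p _ => Finset.sum_congr rfl fun q _ => by ring

theorem differentiable_of_entries {E : Type*} [NormedAddCommGroup E] [NormedSpace 𝕜 E]
    {F : E → Matrix ι κ 𝕜} (h : ∀ p q, Differentiable 𝕜 fun y => F y p q) :
    Differentiable 𝕜 F := by
  have hF : F = fun y => ∑ p, ∑ q, F y p q • (single p q 1 : Matrix ι κ 𝕜) := by
    ext1 y
    simp_rw [smul_single, smul_eq_mul, mul_one]
    exact matrix_eq_sum_single (F y)
  rw [hF]
  exact Differentiable.fun_sum fun p _ => Differentiable.fun_sum fun q _ => (h p q).smul_const _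

end Matrix

theorem exists_lipschitzWith_of_norm_fderiv_le {𝕜 E F : Type*} [RCLike 𝕜]
    [NormedAddCommGroup E] [NormedSpace 𝕜 E] [NormedAddCommGroup F] [NormedSpace 𝕜 F]
    {f : E → F} (hf : Differentiable 𝕜 f) (h : ∃ C, ∀ x, ‖fderiv 𝕜 f x‖ ≤ C) :
    ∃ K, LipschitzWith K f := by
  obtain ⟨C, hC⟩ := h
  refine ⟨C.toNNReal, lipschitzWith_of_nnnorm_fderiv_le hf fun x => ?_⟩
  rw [← Real.toNNReal_coe (r := ‖fderiv 𝕜 f x‖₊), coe_nnnorm]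
  exact Real.toNNReal_le_toNNReal (hC x)

def gammaInv (m n : ℕ) (c : Fin m → ℝ) (k : Fin n → ℝ) (Γ Ω : ℝ)
    (g : Fin m → Fin n → (Fin m → ℝ) → ℝ) (y : Fin m → ℝ) :
    Matrix (Idx m n) (Idx m n) ℝ :=
  Matrix.of fun i j =>
    match i, j with
    | .inl i, .inl j => if i = j then c i else 0
    | .inl i, .inr (.inl j) => g i j y * k j
    | .inl i, .inr (.inr j) => g i j y * k j / Γ
    | .inr (.inl _), .inl _ => 0
    | .inr (.inl i), .inr (.inl j) => if i = j then k i else 0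
    | .inr (.inl i), .inr (.inr j) => if i = j then k i / Γ else 0
    | .inr (.inr _), .inl _ => 0
    | .inr (.inr i), .inr (.inl j) => if i = j then -(Ω ^ 2 / Γ) * k i else 0
    | .inr (.inr _), .inr (.inr _) => 0

section GammaKappa

variable {m n : ℕ} {c : Fin m → ℝ} {k : Fin n → ℝ} {Γ Ω : ℝ}
  {g : Fin m → Fin n → (Fin m → ℝ) → ℝ} {f : Fin m → (Fin m → ℝ) → ℝ}

theorem gammaMat_mul_gammaInv (hc : ∀ i, c i ≠ 0) (hk : ∀ j, k j ≠ 0) (hΓ : Γ ≠ 0)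
    (hΩ : Ω ≠ 0) (y : Fin m → ℝ) :
    gammaMat m n c k Γ Ω g y * gammaInv m n c k Γ Ω g y = 1 := by
  ext (i | i | i) (j | j | j) <;>
    simp only [gammaMat, gammaInv, Matrix.mul_apply, Matrix.of_apply, Fintype.sum_sum_type,
      Matrix.one_apply, Sum.inl.injEq, Sum.inr.injEq, reduceCtorEq, mul_ite, ite_mul, ite_self,
      zero_mul, mul_zero, mul_neg, neg_mul, neg_zero, one_div, Finset.sum_ite_eq,
      Finset.sum_ite_eq', Finset.mem_univ, ↓reduceIte, Finset.sum_const_zero, add_zero, zero_add]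
  all_goals
    try split_ifs
    all_goals (try subst_vars); field_simp [hc, hk] <;> ring

theorem isUnit_gammaMat (hc : ∀ i, c i ≠ 0) (hk : ∀ j, k j ≠ 0) (hΓ : Γ ≠ 0) (hΩ : Ω ≠ 0)
    (y : Fin m → ℝ) : IsUnit (gammaMat m n c k Γ Ω g y) :=
  IsUnit.of_mul_eq_one _ (gammaMat_mul_gammaInv hc hk hΓ hΩ y)

theorem ringInverse_gammaMat (hc : ∀ i, c i ≠ 0) (hk : ∀ j, k j ≠ 0) (hΓ : Γ ≠ 0)
    (hΩ : Ω ≠ 0) (y : Fin m → ℝ) :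
    Ring.inverse (gammaMat m n c k Γ Ω g y) = gammaInv m n c k Γ Ω g y := by
  rw [← Matrix.nonsing_inv_eq_ringInverse,
    Matrix.inv_eq_right_inv (gammaMat_mul_gammaInv hc hk hΓ hΩ y)]

theorem exists_norm_gammaInv_le (hg : ∀ i j, ∃ C, ∀ y, |g i j y| ≤ C) :
    ∃ G, ∀ y, ‖gammaInv m n c k Γ Ω g y‖ ≤ G := by
  refine Matrix.exists_norm_le_of_entries fun p q => ?_
  rcases p with i | i | i <;> rcases q with j | j | j <;> simp only [gammaInv, Matrix.of_apply]
  all_goals first | exact ⟨_, fun _ => le_rfl⟩ | obtain ⟨C, hC⟩ := hg i j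
  · exact ⟨C * ‖k j‖, fun y => by rw [norm_mul, Real.norm_eq_abs]; gcongr; exact hC y⟩
  · exact ⟨C * ‖k j‖ / ‖Γ‖, fun y => by
      rw [norm_div, norm_mul, Real.norm_eq_abs]; gcongr; exact hC y⟩

theorem exists_norm_kappaMat_le (hf : ∀ i, ∃ C, ∀ y, ‖fderiv ℝ (f i) y‖ ≤ C) :
    ∃ K, ∀ y, ‖kappaMat m n c f y‖ ≤ K := by
  refine Matrix.exists_norm_le_of_entries fun p q => ?_
  rcases p with i | i | i <;> rcases q with j | j | j <;> simp only [kappaMat, Matrix.of_apply]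
  all_goals first | exact ⟨_, fun _ => le_rfl⟩ | obtain ⟨C, hC⟩ := hf i
  refine ⟨‖c j / c i‖ * C, fun y => ?_⟩
  rw [norm_mul]
  gcongr
  exact (ContinuousLinearMap.le_of_opNorm_le _ (hC y) _).trans_eq
    (by rw [Pi.norm_single, norm_one, mul_one])

theorem differentiable_gammaMat (hg : ∀ i j, Differentiable ℝ (g i j)) :
    Differentiable ℝ (gammaMat m n c k Γ Ω g) := by
  refine Matrix.differentiable_of_entries fun p q => ?_
  rcases p with i | i | i <;> rcases q with j | j | j <;> simp only [gammaMat, Matrix.of_apply]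
  all_goals first | exact differentiable_const _ | fun_prop

theorem differentiable_kappaMat (hf : ∀ i, Differentiable ℝ (fderiv ℝ (f i))) :
    Differentiable ℝ (kappaMat m n c f) := by
  refine Matrix.differentiable_of_entries fun p q => ?_
  rcases p with i | i | i <;> rcases q with j | j | j <;> simp only [kappaMat, Matrix.of_apply]
  all_goals first | exact differentiable_const _ |
    exact ((hf i).clm_apply (differentiable_const _)).const_mul _

theorem exists_lipschitzWith_gammaMat (hg : ∀ i j, ∃ K, LipschitzWith K (g i j)) :
    ∃ K, LipschitzWith K (gammaMat m n c k Γ Ω g) := by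
  refine Matrix.exists_lipschitzWith_of_entries fun p q => ?_
  rcases p with i | i | i <;> rcases q with j | j | j <;> simp only [gammaMat, Matrix.of_apply]
  all_goals first | exact ⟨0, LipschitzWith.const _⟩ | obtain ⟨K, hK⟩ := hg i j
  have hfun : (fun y => -(g i j y / c i)) = (fun x => -(c i)⁻¹ • x) ∘ g i j := by
    ext y
    simp [div_eq_inv_mul]
  exact ⟨_, hfun ▸ (lipschitzWith_smul (-(c i)⁻¹)).comp hK⟩

theorem exists_lipschitzWith_kappaMat (hf : ∀ i, ∃ K, LipschitzWith K (fderiv ℝ (f i))) :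
    ∃ K, LipschitzWith K (kappaMat m n c f) := by
  refine Matrix.exists_lipschitzWith_of_entries fun p q => ?_
  rcases p with i | i | i <;> rcases q with j | j | j <;> simp only [kappaMat, Matrix.of_apply]
  all_goals first | exact ⟨0, LipschitzWith.const _⟩ | obtain ⟨K, hK⟩ := hf i
  exact ⟨_, ((c j / c i) • ContinuousLinearMap.apply ℝ ℝ (Pi.single j 1)).lipschitz.comp hK⟩

theorem norm_coordVec (l : Idx m n) : ‖coordVec m n l‖ = 1 := by
  rcases l with i | j | j <;> simp [coordVec, Prod.norm_def, Pi.norm_single]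

end GammaKappa

theorem statement2_general (m n : ℕ)
    (c : Fin m → ℝ) (hc : ∀ i, 0 < c i) (k : Fin n → ℝ) (hk : ∀ j, 0 < k j)
    (Γ Ω : ℝ) (hΓ : 0 < Γ) (hΩ : 0 < Ω)
    (g : Fin m → Fin n → (Fin m → ℝ) → ℝ)
    (hg_diff : ∀ i j, Differentiable ℝ (g i j))
    (hg_bdd : ∀ i j, ∃ C, ∀ y, |g i j y| ≤ C)
    (hg_deriv_bdd : ∀ i j, ∃ C, ∀ y, ‖fderiv ℝ (g i j) y‖ ≤ C)
    (f : Fin m → (Fin m → ℝ) → ℝ)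
    (hf_deriv_diff : ∀ i, Differentiable ℝ (fderiv ℝ (f i)))
    (hf_deriv_bdd : ∀ i, ∃ C, ∀ y, ‖fderiv ℝ (f i) y‖ ≤ C)
    (hf_deriv2_bdd : ∀ i, ∃ C, ∀ y, ‖fderiv ℝ (fderiv ℝ (f i)) y‖ ≤ C) :
    ∃ ε₀ > (0:ℝ), ∃ C > (0:ℝ), ∀ ε : ℝ, 0 ≤ ε → ε ≤ ε₀ →
      Differentiable ℝ (fun X : (Fin m → ℝ) × (Fin n → ℝ) × (Fin n → ℝ) =>
        (gammaMat m n c k Γ Ω g X.1 - ε • kappaMat m n c f X.1)⁻¹) ∧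
      ∀ (X : (Fin m → ℝ) × (Fin n → ℝ) × (Fin n → ℝ)) (l : Idx m n),
        ‖fderiv ℝ (fun X : (Fin m → ℝ) × (Fin n → ℝ) × (Fin n → ℝ) =>
            (gammaMat m n c k Γ Ω g X.1 - ε • kappaMat m n c f X.1)⁻¹) X (coordVec m n l)‖
          < C := by
  have hc₀ i : c i ≠ 0 := (hc i).ne'
  have hk₀ j : k j ≠ 0 := (hk j).ne'
  obtain ⟨G, hG⟩ := exists_norm_gammaInv_le (c := c) (k := k) (Γ := Γ) (Ω := Ω) hg_bdd
  obtain ⟨K, hK⟩ := exists_norm_kappaMat_le (n := n) (c := c) hf_deriv_bdd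
  obtain ⟨Lγ, hLγ⟩ := exists_lipschitzWith_gammaMat (c := c) (k := k) (Γ := Γ) (Ω := Ω)
    fun i j => exists_lipschitzWith_of_norm_fderiv_le (hg_diff i j) (hg_deriv_bdd i j)
  obtain ⟨Lκ, hLκ⟩ := exists_lipschitzWith_kappaMat (n := n) (c := c)
    fun i => exists_lipschitzWith_of_norm_fderiv_le (hf_deriv_diff i) (hf_deriv2_bdd i)
  obtain ⟨ε₀, hε₀, C, hC, h⟩ := exists_norm_fderiv_ringInverse_sub_smul_lt (𝕜 := ℝ)
    (a := fun X : (Fin m → ℝ) × (Fin n → ℝ) × (Fin n → ℝ) => gammaMat m n c k Γ Ω g X.1)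
    (b := fun X => kappaMat m n c f X.1)
    ((differentiable_gammaMat hg_diff).comp differentiable_fst)
    ((differentiable_kappaMat hf_deriv_diff).comp differentiable_fst)
    (fun X => isUnit_gammaMat hc₀ hk₀ hΓ.ne' hΩ.ne' X.1)
    (fun X => by rw [ringInverse_gammaMat hc₀ hk₀ hΓ.ne' hΩ.ne']; exact hG X.1)
    (fun X => hK X.1)
    (fun _ => norm_fderiv_le_of_lipschitz ℝ (hLγ.comp LipschitzWith.prod_fst))
    (fun _ => norm_fderiv_le_of_lipschitz ℝ (hLκ.comp LipschitzWith.prod_fst))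
  refine ⟨ε₀, hε₀, C, hC, fun ε hε0 hε => ?_⟩
  simp_rw [Matrix.nonsing_inv_eq_ringInverse]
  obtain ⟨hdiff, hbound⟩ := h ε (by rwa [Real.norm_of_nonneg hε0])
  refine ⟨hdiff, fun X l => ?_⟩
  refine (ContinuousLinearMap.le_opNorm _ _).trans_lt ?_
  rw [norm_coordVec, mul_one]
  exact hbound X

theorem statement2 (m n : ℕ) (hm : 0 < m) (hn : 0 < n)
    (c : Fin m → ℝ) (hc : ∀ i, 0 < c i) (k : Fin n → ℝ) (hk : ∀ j, 0 < k j)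
    (Γ Ω : ℝ) (hΓ : 0 < Γ) (hΩ : 0 < Ω)
    (g : Fin m → Fin n → (Fin m → ℝ) → ℝ)
    (hg_diff : ∀ i j, Differentiable ℝ (g i j))
    (hg_deriv_cont : ∀ i j, Continuous (fderiv ℝ (g i j)))
    (hg_bdd : ∀ i j, ∃ C, ∀ y, |g i j y| ≤ C)
    (hg_deriv_bdd : ∀ i j, ∃ C, ∀ y, ‖fderiv ℝ (g i j) y‖ ≤ C)
    (f : Fin m → (Fin m → ℝ) → ℝ)
    (hf_diff : ∀ i, Differentiable ℝ (f i))
    (hf_deriv_cont : ∀ i, Continuous (fderiv ℝ (f i)))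
    (hf_deriv_diff : ∀ i, Differentiable ℝ (fderiv ℝ (f i)))
    (hf_bdd : ∀ i, ∃ C, ∀ y, |f i y| ≤ C)
    (hf_deriv_bdd : ∀ i, ∃ C, ∀ y, ‖fderiv ℝ (f i) y‖ ≤ C)
    (hf_deriv2_bdd : ∀ i, ∃ C, ∀ y, ‖fderiv ℝ (fderiv ℝ (f i)) y‖ ≤ C) :
    ∃ ε₀ > (0:ℝ), ∃ C > (0:ℝ), ∀ ε : ℝ, 0 ≤ ε → ε ≤ ε₀ →
      Differentiable ℝ (fun X : (Fin m → ℝ) × (Fin n → ℝ) × (Fin n → ℝ) =>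
        (gammaMat m n c k Γ Ω g X.1 - ε • kappaMat m n c f X.1)⁻¹) ∧
      ∀ (X : (Fin m → ℝ) × (Fin n → ℝ) × (Fin n → ℝ)) (l : Idx m n),
        ‖fderiv ℝ (fun X : (Fin m → ℝ) × (Fin n → ℝ) × (Fin n → ℝ) =>
            (gammaMat m n c k Γ Ω g X.1 - ε • kappaMat m n c f X.1)⁻¹) X (coordVec m n l)‖
          < C :=
  statement2_general m n c hc k hk Γ Ω hΓ hΩ g hg_diff hg_bdd hg_deriv_bdd f hf_deriv_diff
    hf_deriv_bdd hf_deriv2_bdd
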